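/- Let C'/C be a field extension, A a C-algebra, and M, N two A-modules. The natural map C' ⊗_C Hom_A(M,N) → Hom_{C' ⊗_C A}(C' ⊗_C M, C' ⊗_C N) is injective, and it is bijective if C'/C is a finite extension or if M is finitely generated as an A-module. -/

import Mathlib

/-!
Choose a `C`-basis `(bᵢ)` of `C'`, so that `C' ⊗_C P ≅ ⨁ᵢ P` naturally in `P`. Writing
`x = ∑ bᵢ ⊗ xᵢ`, the map `Φ x` sends `1 ⊗ m` to `∑ bᵢ ⊗ xᵢ(m)`, so `Φ x = 0` forces every `xᵢ = 0`.
Conversely, for an equivariant `g` the coordinates of `g(1 ⊗ m)` are `A`-linear in `m`, giving maps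
`fᵢ : M → N`, and `∑ bᵢ ⊗ fᵢ` is a preimage of `g` once only finitely many `fᵢ` are nonzero. This
holds when the basis is finite, and when `M` is generated by finitely many `m`, since each
`g(1 ⊗ m)` has finitely many nonzero coordinates.
-/

open scoped TensorProduct

section

variable (C C' : Type*) [Field C] [Field C'] [Algebra C C']
variable (A : Type*) [Ring A] [Algebra C A]
variable {M N : Type*}
variable [AddCommGroup M] [Module C M] [Module A M] [IsScalarTower C A M]
  [SMulCommClass A C M]
variable [AddCommGroup N] [Module C N] [Module A N] [IsScalarTower C A N]
  [SMulCommClass A C N]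

/-- A `C'`-linear map `C' ⊗_C M → C' ⊗_C N` is `A`-equivariant (i.e.
`(C' ⊗_C A)`-linear) if it commutes with the action of every `a ∈ A` on the
second tensor factor. -/
def IsEquivariantMap (g : (C' ⊗[C] M) →ₗ[C'] (C' ⊗[C] N)) : Prop :=
  ∀ a : A,
    (g.restrictScalars C) ∘ₗ
        (LinearMap.lTensor C' (DistribMulAction.toLinearMap C M a)) =
      (LinearMap.lTensor C' (DistribMulAction.toLinearMap C N a)) ∘ₗ
        (g.restrictScalars C)

open TensorProduct

theorem TensorProduct.equivFinsuppOfBasisLeft_lTensor_apply {R F P Q ι : Type*} [CommSemiring R]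
    [AddCommMonoid F] [Module R F] [AddCommMonoid P] [Module R P] [AddCommMonoid Q] [Module R Q]
    [DecidableEq ι] (b : Module.Basis ι R F) (φ : P →ₗ[R] Q) (x : F ⊗[R] P) (i : ι) :
    equivFinsuppOfBasisLeft b (φ.lTensor F x) i = φ (equivFinsuppOfBasisLeft b x i) := by
  induction x with
  | zero => simp
  | tmul f p => simp
  | add x y hx hy => simp [hx, hy]

theorem LinearMap.support_finite_of_support_apply_finite {R P Q ι : Type*} [Semiring R]
    [AddCommMonoid P] [Module R P] [AddCommMonoid Q] [Module R Q] [Module.Finite R P]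
    (f : ι → P →ₗ[R] Q) (hf : ∀ p, (Function.support fun i => f i p).Finite) :
    (Function.support f).Finite := by
  obtain ⟨s, hs⟩ := Module.Finite.fg_top (R := R) (M := P)
  refine (s.finite_toSet.biUnion fun p _ => hf p).subset fun i hi => ?_
  by_contra h
  simp only [Set.mem_iUnion, Function.mem_support, not_exists, not_not] at h
  exact hi (LinearMap.ext_on hs fun p hp => h p hp)

theorem TensorProduct.AlgebraTensorModule.ext_one_tmul {R S M P : Type*} [CommSemiring R]
    [CommSemiring S] [Algebra R S] [AddCommMonoid M] [Module R M] [AddCommMonoid P] [Module R P]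
    [Module S P] [IsScalarTower R S P] {g h : S ⊗[R] M →ₗ[S] P}
    (H : ∀ m, g (1 ⊗ₜ m) = h (1 ⊗ₜ m)) : g = h := by
  refine ext fun s m => ?_
  rw [← mul_one s, ← smul_eq_mul, ← smul_tmul', map_smul, map_smul, H]

section IsBaseChangeHom

variable {R S B P Q : Type*} [CommSemiring R] [CommSemiring S] [Algebra R S] [Semiring B]
  [Algebra R B] [AddCommMonoid P] [Module R P] [Module B P] [IsScalarTower R B P]
  [AddCommMonoid Q] [Module R Q] [Module B Q] [IsScalarTower R B Q] [SMulCommClass B R Q]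

def IsBaseChangeHom (Φ : (S ⊗[R] (P →ₗ[B] Q)) →ₗ[R] ((S ⊗[R] P) →ₗ[S] (S ⊗[R] Q))) : Prop :=
  ∀ (s : S) (f : P →ₗ[B] Q), Φ (s ⊗ₜ[R] f) = s • (LinearMap.baseChange S (f.restrictScalars R))

variable {Φ : (S ⊗[R] (P →ₗ[B] Q)) →ₗ[R] ((S ⊗[R] P) →ₗ[S] (S ⊗[R] Q))}

theorem IsBaseChangeHom.apply_tmul (hΦ : IsBaseChangeHom Φ) (x : S ⊗[R] (P →ₗ[B] Q)) (s : S)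
    (p : P) : Φ x (s ⊗ₜ p) = (LinearMap.applyₗ' R p).lTensor S (s • x) := by
  induction x with
  | zero => simp
  | tmul t f => simp [hΦ t f, smul_tmul', mul_comm]
  | add x y hx hy => simp [hx, hy]

theorem IsBaseChangeHom.apply_one_tmul (hΦ : IsBaseChangeHom Φ) (x : S ⊗[R] (P →ₗ[B] Q))
    (p : P) : Φ x (1 ⊗ₜ p) = (LinearMap.applyₗ' R p).lTensor S x := by
  rw [hΦ.apply_tmul, one_smul]

theorem IsBaseChangeHom.injective [Module.Free R S] (hΦ : IsBaseChangeHom Φ) :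
    Function.Injective Φ := by
  classical
  let b := Module.Free.chooseBasis R S
  intro x y hxy
  refine (equivFinsuppOfBasisLeft b).injective (Finsupp.ext fun i => LinearMap.ext fun p => ?_)
  have hcoord : ∀ z : S ⊗[R] (P →ₗ[B] Q),
      equivFinsuppOfBasisLeft b z i p = equivFinsuppOfBasisLeft b (Φ z (1 ⊗ₜ p)) i :=
    fun z => by rw [hΦ.apply_one_tmul, equivFinsuppOfBasisLeft_lTensor_apply]; rfl
  rw [hcoord, hcoord, hxy]

end IsBaseChangeHom

section

variable {C C' A}

theorem IsBaseChangeHom.isEquivariantMap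
    {Φ : (C' ⊗[C] (M →ₗ[A] N)) →ₗ[C] ((C' ⊗[C] M) →ₗ[C'] (C' ⊗[C] N))}
    (hΦ : IsBaseChangeHom Φ) (x : C' ⊗[C] (M →ₗ[A] N)) : IsEquivariantMap C C' A (Φ x) := by
  intro a
  refine TensorProduct.ext' fun c' m => ?_
  have happly_smul : LinearMap.applyₗ' C (a • m) =
      DistribSMul.toLinearMap C N a ∘ₗ LinearMap.applyₗ' C m :=
    LinearMap.ext fun f => f.map_smul a m
  simp only [LinearMap.comp_apply, LinearMap.restrictScalars_apply, LinearMap.lTensor_tmul,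
    hΦ.apply_tmul]
  rw [← LinearMap.lTensor_comp_apply]
  exact congr(LinearMap.lTensor C' $happly_smul (c' • x))

variable {ι : Type*} [DecidableEq ι] (b : Module.Basis ι C C')

noncomputable def IsEquivariantMap.coord {g : (C' ⊗[C] M) →ₗ[C'] (C' ⊗[C] N)}
    (hg : IsEquivariantMap C C' A g) (i : ι) : M →ₗ[A] N where
  toFun m := equivFinsuppOfBasisLeft b (g (1 ⊗ₜ m)) i
  map_add' m m' := by simp only [tmul_add, map_add, Finsupp.add_apply]
  map_smul' a m := by
    have h := LinearMap.congr_fun (hg a) (1 ⊗ₜ m)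
    simp only [LinearMap.comp_apply, LinearMap.restrictScalars_apply, LinearMap.lTensor_tmul] at h
    exact congr(equivFinsuppOfBasisLeft b $h i).trans
      (equivFinsuppOfBasisLeft_lTensor_apply b _ _ i)

theorem IsBaseChangeHom.exists_eq_of_finite_support_coord
    {Φ : (C' ⊗[C] (M →ₗ[A] N)) →ₗ[C] ((C' ⊗[C] M) →ₗ[C'] (C' ⊗[C] N))}
    (hΦ : IsBaseChangeHom Φ) {g : (C' ⊗[C] M) →ₗ[C'] (C' ⊗[C] N)} (hg : IsEquivariantMap C C' A g)
    (hfin : (Function.support (hg.coord b)).Finite) : ∃ x, Φ x = g := by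
  refine ⟨(equivFinsuppOfBasisLeft b).symm (Finsupp.ofSupportFinite _ hfin),
    AlgebraTensorModule.ext_one_tmul fun m => ?_⟩
  rw [hΦ.apply_one_tmul]
  refine (equivFinsuppOfBasisLeft b).injective (Finsupp.ext fun i => ?_)
  rw [equivFinsuppOfBasisLeft_lTensor_apply, LinearEquiv.apply_symm_apply,
    Finsupp.ofSupportFinite_coe]
  rfl

end

/-- Let `C'/C` be a field extension, `A` a `C`-algebra and `M, N` two
`A`-modules.  The natural map
`C' ⊗_C Hom_A(M,N) → Hom_{C' ⊗_C A}(C' ⊗_C M, C' ⊗_C N)`,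
`c' ⊗ f ↦ c' • (1 ⊗ f)`, is injective (and lands in the `A`-equivariant
maps), and it is bijective onto the `A`-equivariant (`C' ⊗_C A`-linear) maps
if `C'/C` is a finite extension or `M` is finitely generated as an
`A`-module. -/
theorem baseChange_hom_injective_bijective
    (Φ : (C' ⊗[C] (M →ₗ[A] N)) →ₗ[C] ((C' ⊗[C] M) →ₗ[C'] (C' ⊗[C] N)))
    (hΦ : ∀ (c' : C') (f : M →ₗ[A] N),
      Φ (c' ⊗ₜ[C] f) = c' • (LinearMap.baseChange C' (f.restrictScalars C))) :
    Function.Injective Φ ∧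
    (∀ x, IsEquivariantMap C C' A (Φ x)) ∧
    ((FiniteDimensional C C' ∨ Module.Finite A M) →
      ∀ g : (C' ⊗[C] M) →ₗ[C'] (C' ⊗[C] N),
        IsEquivariantMap C C' A g → ∃ x, Φ x = g) := by
  replace hΦ : IsBaseChangeHom Φ := hΦ
  refine ⟨hΦ.injective, hΦ.isEquivariantMap, fun hfin g hg => ?_⟩
  classical
  let b := Module.Free.chooseBasis C C'
  refine hΦ.exists_eq_of_finite_support_coord b hg ?_
  rcases hfin with hC' | hM
  · have := Module.Finite.finite_basis b
    exact Set.toFinite _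
  · exact LinearMap.support_finite_of_support_apply_finite _ fun m =>
      (equivFinsuppOfBasisLeft b (g (1 ⊗ₜ m))).finite_support

end
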